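/- arXiv:1409.8424 — 5 statements merged into one kernel-verified Lean document; each statement's English description precedes it below -/
import Mathlib

section
/- Let V be a finite type and G a simple graph on V which admits a proper 2-coloring (G is 2-colorable). Then the number of functions c : V → Fin 2 such that c u ≠ c v whenever G.Adj u v is exactly 2^{number of connected components of G}. -/
/-!
Fix one proper 2-coloring `c₀`. Over `Fin 2`, two colors differ exactly when their
difference is `1`, so a coloring `c` is proper iff `c - c₀` takes equal values at the ends of
every edge, i.e. iff `c - c₀` is constant on connected components. Hence `c ↦ c - c₀` identifies
proper 2-colorings with arbitrary maps from the components to `Fin 2`.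
-/

theorem Fin.two_ne_iff_sub_eq_sub {a b a₀ b₀ : Fin 2} (h₀ : a₀ ≠ b₀) :
    a ≠ b ↔ a - a₀ = b - b₀ := by
  revert a b a₀ b₀
  decide

namespace SimpleGraph

variable {V : Type*} {G : SimpleGraph V}

theorem reachableSetoid_le_ker_iff {β : Type*} {f : V → β} :
    G.reachableSetoid ≤ Setoid.ker f ↔ ∀ u v, G.Adj u v → f u = f v := by
  refine ⟨fun hf u v huv => hf huv.reachable, fun hf u v huv => ?_⟩
  obtain ⟨p⟩ := huv
  induction p with
  | nil => rfl
  | cons huv _ ih => exact (hf _ _ huv).trans ih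

def ConnectedComponent.liftEquiv (β : Type*) :
    {f : V → β // ∀ u v, G.Adj u v → f u = f v} ≃ (G.ConnectedComponent → β) :=
  (Equiv.subtypeEquivRight fun _ => reachableSetoid_le_ker_iff.symm).trans
    (Setoid.liftEquiv G.reachableSetoid)

def properTwoColoringsEquivSubRight {c₀ : V → Fin 2} (hc₀ : ∀ u v, G.Adj u v → c₀ u ≠ c₀ v) :
    {c : V → Fin 2 // ∀ u v, G.Adj u v → c u ≠ c v} ≃
      {f : V → Fin 2 // ∀ u v, G.Adj u v → f u = f v} :=
  (Equiv.subRight c₀).subtypeEquiv fun _ =>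
    forall₃_congr fun u v huv => Fin.two_ne_iff_sub_eq_sub (hc₀ u v huv)

end SimpleGraph

open SimpleGraph in
/-- a 2-colorable graph on a finite vertex set has exactly
`2 ^ (number of connected components)` proper 2-colorings. -/
theorem card_proper_two_colorings {V : Type*} [Fintype V] (G : SimpleGraph V)
    (h : ∃ c : V → Fin 2, ∀ u v : V, G.Adj u v → c u ≠ c v) :
    Nat.card {c : V → Fin 2 // ∀ u v : V, G.Adj u v → c u ≠ c v} =
      2 ^ Nat.card G.ConnectedComponent := by
  obtain ⟨c₀, hc₀⟩ := h
  rw [Nat.card_congr ((properTwoColoringsEquivSubRight hc₀).trans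
    (ConnectedComponent.liftEquiv (Fin 2))), Nat.card_fun, Nat.card_fin]
end

section
/- Let n, m, β be natural numbers, f₁, f₂ : Fin m → Fin n and e : Fin m → (Fin β → ZMod 2). Consider the system of equations η(f₁ i) + η(f₂ i) = e i for all i ∈ Fin m, in the unknown η : Fin n → (Fin β → ZMod 2). If this system has at least one solution, then the number of its solutions is exactly 2^{β · cc}, where cc is the number of connected components of the simple graph on Fin n in which u ≠ v are adjacent iff {u,v} = {f₁ i, f₂ i} for some i ∈ Fin m. -/
/-!
Translating by a fixed solution `η₀` identifies the solutions with those of the homogeneous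
system, and over `ZMod 2` the equation `η (f₁ i) + η (f₂ i) = 0` says `η (f₁ i) = η (f₂ i)`.
So the homogeneous solutions are exactly the maps `Fin n → (ZMod 2)^β` that are constant along
every edge, i.e. the maps from the set of connected components to `(ZMod 2)^β`.
-/

open SimpleGraph

section Graph

variable {V X : Type*} {G : SimpleGraph V}

theorem SimpleGraph.Reachable.apply_eq_of_forall_adj {f : V → X}
    (hf : ∀ u v, G.Adj u v → f u = f v) {u v : V} (h : G.Reachable u v) : f u = f v := by
  obtain ⟨p⟩ := h
  induction p with
  | nil => rfl
  | cons hadj _ ih => exact (hf _ _ hadj).trans ih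

variable (G X) in
def SimpleGraph.adjInvariantFunEquiv :
    {f : V → X // ∀ u v, G.Adj u v → f u = f v} ≃ (G.ConnectedComponent → X) where
  toFun f := ConnectedComponent.lift f.1 fun _ _ p _ => p.reachable.apply_eq_of_forall_adj f.2
  invFun c := ⟨c ∘ G.connectedComponentMk,
    fun _ _ h => congrArg c (ConnectedComponent.connectedComponentMk_eq_of_adj h)⟩
  left_inv _ := rfl
  right_inv _ := funext fun x => x.ind fun _ => rfl

theorem forall_apply_eq_iff_forall_adj_fromRel {ι : Type*} (f₁ f₂ : ι → V) (η : V → X) :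
    (∀ i, η (f₁ i) = η (f₂ i)) ↔
      ∀ u v, (fromRel fun u v => ∃ i, s(u, v) = s(f₁ i, f₂ i)).Adj u v → η u = η v := by
  constructor
  · rintro h u v ⟨-, ⟨i, hi⟩ | ⟨i, hi⟩⟩ <;>
      rcases Sym2.eq_iff.mp hi with ⟨rfl, rfl⟩ | ⟨rfl, rfl⟩
    exacts [h i, (h i).symm, (h i).symm, h i]
  · intro h i
    by_cases hf : f₁ i = f₂ i
    · rw [hf]
    · exact h _ _ ⟨hf, Or.inl ⟨i, rfl⟩⟩

end Graph

section XorSystem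

variable {V ι A : Type*} [AddCommGroup A] [Module (ZMod 2) A]

theorem ZModModule.add_eq_zero_iff_eq {x y : A} : x + y = 0 ↔ x = y := by
  rw [add_eq_zero_iff_eq_neg, ZModModule.neg_eq_self]

def xorSolutionsEquivOfSolution {f₁ f₂ : ι → V} {e : ι → A} {η₀ : V → A}
    (hη₀ : ∀ i, η₀ (f₁ i) + η₀ (f₂ i) = e i) :
    {η : V → A // ∀ i, η (f₁ i) = η (f₂ i)} ≃
      {η : V → A // ∀ i, η (f₁ i) + η (f₂ i) = e i} :=
  (Equiv.addRight η₀).subtypeEquiv fun η => forall_congr' fun i => by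
    simp only [Equiv.coe_addRight, Pi.add_apply]
    rw [add_add_add_comm, hη₀ i, add_eq_right, ZModModule.add_eq_zero_iff_eq]

end XorSystem

/-- a satisfiable system of Xor-equations
`η (f₁ i) + η (f₂ i) = e i` over `ZMod 2`-vectors of length `β` has exactly
`2 ^ (β · cc)` solutions, where `cc` is the number of connected components of the
graph on `Fin n` whose edges are the pairs `{f₁ i, f₂ i}`. -/
theorem card_solutions_xor_system (n m β : ℕ)
    (f₁ f₂ : Fin m → Fin n) (e : Fin m → Fin β → ZMod 2)
    (h : ∃ η : Fin n → Fin β → ZMod 2, ∀ i : Fin m, η (f₁ i) + η (f₂ i) = e i) :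
    Nat.card {η : Fin n → Fin β → ZMod 2 // ∀ i : Fin m, η (f₁ i) + η (f₂ i) = e i} =
      2 ^ (β * Nat.card
        (SimpleGraph.fromRel fun u v : Fin n =>
          ∃ i : Fin m, s(u, v) = s(f₁ i, f₂ i)).ConnectedComponent) := by
  obtain ⟨η₀, hη₀⟩ := h
  let G := fromRel fun u v : Fin n => ∃ i : Fin m, s(u, v) = s(f₁ i, f₂ i)
  have solutionsEquiv :
      {η : Fin n → Fin β → ZMod 2 // ∀ i, η (f₁ i) + η (f₂ i) = e i} ≃
        (G.ConnectedComponent → Fin β → ZMod 2) :=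
    (xorSolutionsEquivOfSolution hη₀).symm.trans <|
      (Equiv.subtypeEquivRight (forall_apply_eq_iff_forall_adj_fromRel f₁ f₂)).trans
        (G.adjInvariantFunEquiv _)
  rw [Nat.card_congr solutionsEquiv, Nat.card_fun, Nat.card_fun, Nat.card_zmod, Nat.card_fin,
    ← pow_mul]
end

section
/- Let R be a vertex-transitive q × q real matrix with common row sum δ = Σ_j R 0 j. Then the dimension of the eigenspace {v : Fin q → ℝ | R.mulVec v = δ • v} equals the number of connected components of the simple graph on Fin q in which i ≠ j are adjacent iff R i j ≠ 0. -/
/-!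
For a symmetric nonnegative matrix `A` whose rows all sum to `δ`, the Dirichlet form
`∑ i j, A i j * (v i - v j) ^ 2` equals `2 ⟪v, (δ - A) v⟫`. Hence the `δ`-eigenvectors are exactly
the vectors that agree across every nonzero entry of `A`, i.e. the functions that are constant on
the connected components of the support graph of `A`. Vertex-transitivity makes all row sums equal.
-/

open Finset

namespace SimpleGraph

variable {V K M : Type*} [Semiring K] [AddCommMonoid M] [Module K M] (G : SimpleGraph V)

theorem mem_range_funLeft_connectedComponentMk_iff {v : V → M} :
    v ∈ LinearMap.range (LinearMap.funLeft K M G.connectedComponentMk) ↔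
      ∀ i j, G.Adj i j → v i = v j := by
  constructor
  · rintro ⟨f, rfl⟩ i j hij
    exact congrArg f (ConnectedComponent.sound hij.reachable)
  · intro h
    refine ⟨Quot.lift v fun i j (hij : G.Reachable i j) => ?_, rfl⟩
    obtain ⟨w⟩ := hij
    induction w with
    | nil => rfl
    | cons hadj _ ih => exact (h _ _ hadj).trans ih

end SimpleGraph

namespace Matrix

variable {ι : Type*}

def supportGraph {α : Type*} [Zero α] (A : Matrix ι ι α) : SimpleGraph ι :=
  SimpleGraph.fromRel fun i j => A i j ≠ 0

variable [Fintype ι]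

theorem sum_apply_perm_eq {α : Type*} [AddCommMonoid α] {A : Matrix ι ι α} (π : Equiv.Perm ι)
    (hπ : ∀ a b, A (π a) (π b) = A a b) (i : ι) : ∑ k, A (π i) k = ∑ k, A i k := by
  rw [← Equiv.sum_comp π]
  simp only [hπ]

theorem sum_mul_sub_sq_of_isSymm {R : Type*} [CommRing R] {A : Matrix ι ι R} (hA : A.IsSymm)
    (v : ι → R) :
    ∑ i, ∑ j, A i j * (v i - v j) ^ 2 = 2 * ∑ i, v i * ((∑ j, A i j) * v i - (A *ᵥ v) i) := by
  have hswap : ∑ i, ∑ j, A i j * v j ^ 2 = ∑ i, ∑ j, A i j * v i ^ 2 := by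
    rw [sum_comm]
    simp only [hA.apply]
  calc ∑ i, ∑ j, A i j * (v i - v j) ^ 2
      = ∑ i, ∑ j, (2 * (A i j * v i ^ 2 - v i * (A i j * v j))
          + (A i j * v j ^ 2 - A i j * v i ^ 2)) := by
        refine sum_congr rfl fun i _ => sum_congr rfl fun j _ => ?_
        ring
    _ = 2 * ∑ i, ∑ j, (A i j * v i ^ 2 - v i * (A i j * v j))
          + (∑ i, ∑ j, A i j * v j ^ 2 - ∑ i, ∑ j, A i j * v i ^ 2) := by
        simp only [sum_add_distrib, sum_sub_distrib, ← mul_sum]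
    _ = 2 * ∑ i, v i * ((∑ j, A i j) * v i - (A *ᵥ v) i) := by
        rw [hswap, sub_self, add_zero]
        congr 1
        refine sum_congr rfl fun i _ => ?_
        simp only [mulVec, dotProduct, mul_sub, sum_mul, mul_sum, sum_sub_distrib]
        congr 1
        exact sum_congr rfl fun j _ => by ring

variable {A : Matrix ι ι ℝ} {δ : ℝ}

theorem apply_eq_of_mulVec_eq_smul (hA : A.IsSymm) (hnn : ∀ i j, 0 ≤ A i j)
    (hrow : ∀ i, ∑ j, A i j = δ) {v : ι → ℝ} (hv : A *ᵥ v = δ • v) {i j : ι} (hij : A i j ≠ 0) :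
    v i = v j := by
  have hform : ∑ i, ∑ j, A i j * (v i - v j) ^ 2 = 0 := by
    simp [sum_mul_sub_sq_of_isSymm hA, hrow, hv]
  have hterm : A i j * (v i - v j) ^ 2 = 0 := by
    have hnn' : ∀ i j, 0 ≤ A i j * (v i - v j) ^ 2 := fun i j =>
      mul_nonneg (hnn i j) (sq_nonneg _)
    rw [sum_eq_zero_iff_of_nonneg fun i _ => sum_nonneg fun j _ => hnn' i j] at hform
    exact (sum_eq_zero_iff_of_nonneg fun j _ => hnn' i j).1 (hform i (mem_univ i)) j (mem_univ j)
  simpa [hij, sub_eq_zero] using hterm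

variable [DecidableEq ι]

theorem mem_eigenspace_toLin'_iff (hA : A.IsSymm) (hnn : ∀ i j, 0 ≤ A i j)
    (hrow : ∀ i, ∑ j, A i j = δ) {v : ι → ℝ} :
    v ∈ Module.End.eigenspace (toLin' A) δ ↔ ∀ i j, A i j ≠ 0 → v i = v j := by
  rw [Module.End.mem_eigenspace_iff, toLin'_apply]
  refine ⟨fun hv i j => apply_eq_of_mulVec_eq_smul hA hnn hrow hv, fun h => ?_⟩
  ext i
  calc (A *ᵥ v) i = ∑ j, A i j * v i := by
        refine sum_congr rfl fun j _ => ?_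
        by_cases hij : A i j = 0
        · simp [hij]
        · rw [h i j hij]
    _ = (δ • v) i := by rw [← sum_mul, hrow, Pi.smul_apply, smul_eq_mul]

theorem eigenspace_toLin'_eq_range_funLeft (hA : A.IsSymm) (hnn : ∀ i j, 0 ≤ A i j)
    (hrow : ∀ i, ∑ j, A i j = δ) :
    Module.End.eigenspace (toLin' A) δ =
      LinearMap.range (LinearMap.funLeft ℝ ℝ A.supportGraph.connectedComponentMk) := by
  ext v
  rw [mem_eigenspace_toLin'_iff hA hnn hrow,
    SimpleGraph.mem_range_funLeft_connectedComponentMk_iff]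
  simp only [supportGraph, SimpleGraph.fromRel_adj, hA.apply, or_self]
  refine ⟨fun h i j hij => h i j hij.2, fun h i j hij => ?_⟩
  by_cases hii : i = j
  · rw [hii]
  · exact h i j ⟨hii, hij⟩

theorem finrank_eigenspace_toLin'_eq_card_connectedComponent (hA : A.IsSymm)
    (hnn : ∀ i j, 0 ≤ A i j) (hrow : ∀ i, ∑ j, A i j = δ) :
    Module.finrank ℝ (Module.End.eigenspace (toLin' A) δ) =
      Nat.card A.supportGraph.ConnectedComponent := by
  classical
  have hinj : Function.Injective (LinearMap.funLeft ℝ ℝ A.supportGraph.connectedComponentMk) :=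
    LinearMap.funLeft_injective_of_surjective _ _ _ Quot.mk_surjective
  rw [eigenspace_toLin'_eq_range_funLeft hA hnn hrow, LinearMap.finrank_range_of_inj hinj,
    Module.finrank_fintype_fun_eq_card, Nat.card_eq_fintype_card]

end Matrix

namespace Inhomog

noncomputable section
def IsVertexTransitive {q : ℕ} (R : Matrix (Fin q) (Fin q) ℝ) : Prop :=
  R.IsSymm ∧ (∀ i j, 0 ≤ R i j) ∧
    ∀ i j : Fin q, ∃ π : Equiv.Perm (Fin q), π i = j ∧ ∀ a b, R (π a) (π b) = R a b

/-- the dimension of the `δ`-eigenspace of a vertex-transitive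
matrix equals the number of connected components of its support graph. -/
theorem eigenspace_dim_eq_card_components (q : ℕ) (hq : 0 < q)
    (R : Matrix (Fin q) (Fin q) ℝ) (hR : IsVertexTransitive R) :
    Module.finrank ℝ
        ↥(Module.End.eigenspace (Matrix.toLin' R) (∑ j, R ⟨0, hq⟩ j)) =
      Nat.card (SimpleGraph.fromRel fun i j : Fin q => R i j ≠ 0).ConnectedComponent := by
  obtain ⟨hsymm, hnn, htrans⟩ := hR
  refine Matrix.finrank_eigenspace_toLin'_eq_card_connectedComponent hsymm hnn fun i => ?_
  obtain ⟨π, rfl, hπ⟩ := htrans ⟨0, hq⟩ i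
  exact Matrix.sum_apply_perm_eq π hπ _

end

end Inhomog
end

section
/- Let n, m ∈ ℕ and let E be a multiset of cardinality m over Sym2 (Fin n). Then the number of functions f : Fin m → Fin n × Fin n such that the multiset image of i ↦ s((f i).1, (f i).2) equals E is exactly 2^m · m! · κ(E) (an equality of rational numbers). -/
/-!
For any map `π : β → γ` of finite types, splitting off the first letter of a word shows, by
induction on the length `m`, that the number `N(E)` of words `f : Fin m → β` whose letters project
under `π` onto the multiset `E` satisfies `N(E) · ∏_c (count c E)! = m! · ∏_{c ∈ E} |π⁻¹ c|`.
For `π = Sym2.mk` on `α × α` a loop has one preimage and every other edge two, so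
`∏_{c ∈ E} |π⁻¹ c| = 2 ^ m / 2 ^ (number of loops of E)`, which turns the identity into
`N(E) = 2 ^ m · m! · κ(E)`.
-/

namespace Inhomog

noncomputable section
/-- Compensation factor of a multigraph given as a multiset of unordered pairs. -/
def kappa {n : ℕ} (E : Multiset (Sym2 (Fin n))) : ℚ :=
  (∏ v : Fin n, ((2 : ℚ) ^ (E.count s(v, v)))⁻¹) *
    ∏ e ∈ E.toFinset, ((E.count e).factorial : ℚ)⁻¹

open Finset Multiset Nat

theorem card_filter_fin_cons {α : Type*} [Fintype α] {m : ℕ}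
    (P : (Fin (m + 1) → α) → Prop) [DecidablePred P] :
    #{f | P f} = ∑ a, #{g : Fin m → α | P (Fin.cons a g)} := by
  simp only [Finset.card_filter]
  rw [← (Fin.consEquiv fun _ => α).sum_comp, Fintype.sum_prod_type]
  rfl

section Words

variable {β γ : Type*} [Fintype β] [DecidableEq γ] (π : β → γ)

def words (m : ℕ) (E : Multiset γ) : Finset (Fin m → β) :=
  {f | (univ.val.map fun i => π (f i)) = E}

def fiberCard (c : γ) : ℕ := #{b | π b = c}

theorem cons_eq_iff_mem_and_eq_erase {a : γ} {s t : Multiset γ} :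
    a ::ₘ s = t ↔ a ∈ t ∧ s = t.erase a := by
  constructor
  · rintro rfl
    exact ⟨mem_cons_self _ _, (erase_cons_head _ _).symm⟩
  · rintro ⟨ha, rfl⟩
    exact cons_erase ha

theorem card_words_succ (m : ℕ) (E : Multiset γ) :
    #(words π (m + 1) E) =
      ∑ b, if π b ∈ E then #(words π m (E.erase (π b))) else 0 := by
  rw [words, card_filter_fin_cons]
  refine sum_congr rfl fun b _ => ?_
  simp only [Fin.univ_val_map, List.ofFn_succ, Fin.cons_zero, Fin.cons_succ, ← Multiset.cons_coe,
    cons_eq_iff_mem_and_eq_erase]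
  split_ifs with hb <;> simp [hb, words, Fin.univ_val_map]

theorem prod_factorial_count_cons [Fintype γ] (e : γ) (E : Multiset γ) :
    ∏ c, ((e ::ₘ E).count c)! = (E.count e + 1) * ∏ c, (E.count c)! := by
  rw [← mul_prod_erase univ _ (mem_univ e), ← mul_prod_erase univ _ (mem_univ e),
    count_cons_self, factorial_succ, mul_assoc]
  congr 2
  refine prod_congr rfl fun c hc => ?_
  rw [count_cons_of_ne (ne_of_mem_erase hc)]

theorem prod_factorial_count_eq_count_mul [Fintype γ] {e : γ} {E : Multiset γ} (he : e ∈ E) :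
    ∏ c, (E.count c)! = E.count e * ∏ c, ((E.erase e).count c)! := by
  conv_lhs => rw [← cons_erase he]
  rw [prod_factorial_count_cons, ← count_cons_self, cons_erase he]

theorem sum_count_mul_prod_map_erase [Fintype γ] (E : Multiset γ) :
    ∑ b, E.count (π b) * ((E.erase (π b)).map (fiberCard π)).prod =
      card E * (E.map (fiberCard π)).prod := by
  rw [← sum_fiberwise' univ π fun c => E.count c * ((E.erase c).map (fiberCard π)).prod,
    ← Multiset.sum_count_eq_card (s := univ) (by simp), sum_mul]
  refine sum_congr rfl fun c _ => ?_
  rw [sum_const, smul_eq_mul]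
  by_cases hc : c ∈ E
  · rw [← prod_map_erase hc, fiberCard]; ring
  · simp [count_eq_zero_of_notMem hc]

theorem card_words_mul_prod_factorial_count [Fintype γ] {m : ℕ} {E : Multiset γ}
    (hE : card E = m) :
    #(words π m E) * ∏ c, (E.count c)! = m ! * (E.map (fiberCard π)).prod := by
  induction m generalizing E with
  | zero =>
    obtain rfl := card_eq_zero.mp hE
    simp [words]
  | succ m ih =>
    calc #(words π (m + 1) E) * ∏ c, (E.count c)!
        = ∑ b, E.count (π b) * (#(words π m (E.erase (π b))) *
            ∏ c, ((E.erase (π b)).count c)!) := by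
          rw [card_words_succ, sum_mul]
          refine sum_congr rfl fun b _ => ?_
          split_ifs with hb
          · rw [prod_factorial_count_eq_count_mul hb]; ring
          · simp [count_eq_zero_of_notMem hb]
      _ = ∑ b, m ! * (E.count (π b) * ((E.erase (π b)).map (fiberCard π)).prod) := by
          refine sum_congr rfl fun b _ => ?_
          by_cases hb : π b ∈ E
          · rw [ih (by rw [card_erase_of_mem hb, hE]; rfl)]; ring
          · simp [count_eq_zero_of_notMem hb]
      _ = (m + 1)! * (E.map (fiberCard π)).prod := by
          rw [← mul_sum, sum_count_mul_prod_map_erase, hE, factorial_succ]; ring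

end Words

section Sym2

variable {α : Type*} [Fintype α] [DecidableEq α]

theorem fiberCard_sym2Mk (z : Sym2 α) :
    fiberCard (Sym2.mk.uncurry : α × α → Sym2 α) z = if z.IsDiag then 1 else 2 := by
  induction z using Sym2.ind with | _ a b => ?_
  have : ({p | Sym2.mk.uncurry p = s(a, b)} : Finset (α × α)) = {(a, b), (b, a)} := by
    ext ⟨x, y⟩; simp
  rw [fiberCard, this]
  by_cases hab : a = b
  · simp [hab]
  · simp [hab, Ne.symm hab]

theorem fiberCard_sym2Mk_mul_prod_pow_diag (z : Sym2 α) :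
    fiberCard (Sym2.mk.uncurry : α × α → Sym2 α) z *
      ∏ v, 2 ^ (if s(v, v) = z then 1 else 0) = 2 := by
  induction z using Sym2.ind with | _ a b => ?_
  rw [fiberCard_sym2Mk]
  by_cases hab : a = b
  · simp [hab]
  · simp [hab]
    grind

theorem prod_map_fiberCard_mul_prod_pow_count_diag (E : Multiset (Sym2 α)) :
    (E.map (fiberCard (Sym2.mk.uncurry : α × α → Sym2 α))).prod *
      ∏ v, 2 ^ E.count s(v, v) = 2 ^ card E := by
  induction E using Multiset.induction_on with
  | empty => simp
  | cons e E ih =>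
    simp only [Multiset.map_cons, Multiset.prod_cons, count_cons, pow_add, prod_mul_distrib,
      Multiset.card_cons]
    calc _ = ((E.map (fiberCard Sym2.mk.uncurry)).prod * ∏ v, 2 ^ E.count s(v, v)) *
          (fiberCard Sym2.mk.uncurry e * ∏ v, 2 ^ (if s(v, v) = e then 1 else 0)) := by ring
      _ = 2 ^ (card E + 1) := by rw [ih, fiberCard_sym2Mk_mul_prod_pow_diag, pow_succ]

end Sym2

theorem kappa_eq_inv {n : ℕ} (E : Multiset (Sym2 (Fin n))) :
    kappa E = (((∏ v, 2 ^ E.count s(v, v)) * ∏ e, (E.count e)! : ℕ) : ℚ)⁻¹ := by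
  rw [kappa, prod_subset (subset_univ E.toFinset) fun e _ he => by
    simp [count_eq_zero_of_notMem (by simpa using he)]]
  push_cast
  rw [mul_inv, prod_inv_distrib, prod_inv_distrib]

/-- a multigraph with `m` edges corresponds to exactly
`2^m · m! · κ(E)` ordered sequences of `m` ordered couples of vertices. -/
theorem card_sequences_eq (n m : ℕ) (E : Multiset (Sym2 (Fin n)))
    (hE : Multiset.card E = m) :
    ((Finset.univ.filter fun f : Fin m → Fin n × Fin n =>
        Multiset.map (fun i => s((f i).1, (f i).2)) Finset.univ.val = E).card : ℚ) =
      2 ^ m * (m.factorial : ℚ) * kappa E := by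
  subst hE
  have hwords := card_words_mul_prod_factorial_count Sym2.mk.uncurry (E := E) rfl
  have hdiag := prod_map_fiberCard_mul_prod_pow_count_diag E
  change (#(words Sym2.mk.uncurry _ E) : ℚ) = _
  rw [kappa_eq_inv, eq_mul_inv_iff_mul_eq₀ (by positivity)]
  norm_cast
  rw [← hdiag]
  linear_combination (∏ v, 2 ^ E.count s(v, v)) * hwords

end

end Inhomog
end

section
/- Let R be a symmetric q × q real matrix with nonnegative entries and take σ = 1. Then for all n, m ∈ ℕ, g_{R,1}(n,m) = (1/(2^m · m!)) · Σ_{n⃗} (n! / ∏_{i} n⃗_i!) · (Σ_{i,j} n⃗_i · R i j · n⃗_j)^m, where the sum ranges over all vectors n⃗ : Fin q → ℕ with Σ_i n⃗_i = n. -/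
/-!
With `σ = 1` the weight of `(E, c)` ignores connectivity. For a fixed colouring `c`, the
multinomial theorem shows that `κ(E)` is exactly the coefficient making
`∑_E κ(E) ∏_e x_e ^ (E.count e) = (∑_e w_e x_e) ^ m / m!`, with `w_e = 1/2` for loops and `1`
otherwise. For `x_{s(u,v)} = R (c u) (c v)` and `R` symmetric, `∑_e w_e x_e` is half the ordered
double sum `∑_{u,v} R (c u) (c v) = ∑_{i,j} n_i R i j n_j`, where `n_i` is the size of the colour
class `i`. Grouping the colourings by their class sizes finishes the proof: there are
`n! / ∏ n_i!` colourings with given class sizes, the coefficient of `∏ X_i ^ n_i` in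
`(X_1 + ⋯ + X_q) ^ n`.
-/

namespace Inhomog

noncomputable section

/-- Support graph of a multigraph: `u ≠ v` adjacent iff `s(u,v) ∈ E`. -/
def supportGraph {n : ℕ} (E : Multiset (Sym2 (Fin n))) : SimpleGraph (Fin n) :=
  SimpleGraph.fromRel fun u v => s(u, v) ∈ E

/-- Number of connected components of the support graph. -/
def cc {n : ℕ} (E : Multiset (Sym2 (Fin n))) : ℕ :=
  Nat.card (supportGraph E).ConnectedComponent

/-- Weight of a colored multigraph. -/
def weight {q n : ℕ} (R : Matrix (Fin q) (Fin q) ℝ) (σ : ℝ)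
    (E : Multiset (Sym2 (Fin n))) (c : Fin n → Fin q) : ℝ :=
  (kappa E : ℝ) * σ ^ cc E *
    ∏ e ∈ E.toFinset, (R (c e.inf) (c e.sup)) ^ (E.count e)

/-- Total weight of `(R,σ)`-multigraphs with `n` vertices and `m` edges. -/
def g {q : ℕ} (R : Matrix (Fin q) (Fin q) ℝ) (σ : ℝ) (n m : ℕ) : ℝ :=
  ∑ E : Sym (Sym2 (Fin n)) m, ∑ c : Fin n → Fin q, weight R σ E.1 c

open Finset

lemma _root_.Nat.cast_multinomial {α K : Type*} [Field K] [CharZero K] (s : Finset α) (f : α → ℕ) :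
    (Nat.multinomial s f : K) = (∑ i ∈ s, f i).factorial / ∏ i ∈ s, ((f i).factorial : K) := by
  rw [eq_div_iff (prod_ne_zero_iff.2 fun i _ => Nat.cast_ne_zero.2 (Nat.factorial_ne_zero _)),
    mul_comm, ← Nat.cast_prod, ← Nat.cast_mul, Nat.multinomial_spec]

lemma _root_.Multiset.prod_factorial_count_mul_countPerms {α : Type*} [DecidableEq α]
    (s : Multiset α) :
    (∏ e ∈ s.toFinset, (s.count e).factorial) * s.countPerms = (Multiset.card s).factorial := by
  have hmultinomial : s.countPerms = Nat.multinomial s.toFinset s.count := by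
    rw [Multiset.countPerms, Finsupp.multinomial_eq, Multiset.toFinsupp_support]
    exact Nat.multinomial_congr fun e _ => Multiset.toFinsupp_apply s e
  rw [hmultinomial, Nat.multinomial_spec, Multiset.toFinset_sum_count_eq]

section ClassSizes

variable {ι κ M : Type*} [Fintype ι] [DecidableEq κ]

def classSizes (c : ι → κ) (i : κ) : ℕ := #{u | c u = i}

variable [Fintype κ]

@[to_additive]
lemma prod_comp_eq_prod_pow_classSizes [CommMonoid M] (c : ι → κ) (f : κ → M) :
    ∏ u, f (c u) = ∏ i, f i ^ classSizes c i := by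
  simp_rw [classSizes, ← prod_const, prod_fiberwise']

lemma sum_classSizes (c : ι → κ) : ∑ i, classSizes c i = Fintype.card ι :=
  (card_eq_sum_card_fiberwise fun u _ => mem_univ (c u)).symm

lemma prod_X_comp_eq_monomial (c : ι → κ) :
    ∏ u, (MvPolynomial.X (c u) : MvPolynomial κ ℕ) =
      MvPolynomial.monomial (Finsupp.equivFunOnFinite.symm (classSizes c)) 1 := by
  rw [prod_comp_eq_prod_pow_classSizes, MvPolynomial.monomial_eq, map_one, one_mul,
    Finsupp.prod_fintype _ _ fun _ => pow_zero _]
  rfl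

lemma card_classSizes_eq [DecidableEq ι] (v : κ → ℕ) (hv : ∑ i, v i = Fintype.card ι) :
    #{c : ι → κ | classSizes c = v} = Nat.multinomial univ v := by
  have hpow : (∑ i, MvPolynomial.X i : MvPolynomial κ ℕ) ^ Fintype.card ι =
      ∑ c : ι → κ, MvPolynomial.monomial (Finsupp.equivFunOnFinite.symm (classSizes c)) 1 := by
    rw [← card_univ, ← prod_const, prod_univ_sum, Fintype.piFinset_univ]
    simp_rw [prod_X_comp_eq_monomial]
  have hcoeff := congrArg (MvPolynomial.coeff (Finsupp.equivFunOnFinite.symm v)) hpow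
  rw [MvPolynomial.coeff_sum_X_pow_of_fintype, MvPolynomial.coeff_sum,
    Finsupp.sum_fintype _ _ fun _ => rfl,
    Finsupp.multinomial_eq_of_support_subset (subset_univ _)] at hcoeff
  simp only [Finsupp.coe_equivFunOnFinite_symm, hv, if_true, Nat.cast_id,
    MvPolynomial.coeff_monomial, EmbeddingLike.apply_eq_iff_eq] at hcoeff
  rw [hcoeff, card_filter]

lemma sum_comp_classSizes [DecidableEq ι] [AddCommMonoid M] (F : (κ → ℕ) → M) :
    ∑ c : ι → κ, F (classSizes c) =
      ∑ v ∈ piAntidiag univ (Fintype.card ι), Nat.multinomial univ v • F v := by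
  rw [← sum_fiberwise_of_maps_to (g := classSizes)
    fun c _ => mem_piAntidiag.2 ⟨sum_classSizes c, fun i _ => mem_univ i⟩]
  refine sum_congr rfl fun v hv => ?_
  rw [sum_congr rfl fun c hc => by rw [(mem_filter.1 hc).2], sum_const,
    card_classSizes_eq v (mem_piAntidiag.1 hv).1]

lemma sum_sum_comp_eq_sum_sum_classSizes [CommSemiring M] (c : ι → κ) (f : κ → κ → M) :
    ∑ u, ∑ v, f (c u) (c v) = ∑ i, ∑ j, (classSizes c i : M) * f i j * classSizes c j := by
  rw [sum_comp_eq_sum_nsmul_classSizes c fun i => ∑ v, f i (c v)]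
  simp_rw [sum_comp_eq_sum_nsmul_classSizes c (f _), smul_sum, nsmul_eq_mul]
  exact sum_congr rfl fun i _ => sum_congr rfl fun j _ => by ring

end ClassSizes

lemma inf_sup_apply_of_symm {α M : Type*} [LinearOrder α] {f : α → α → M}
    (hf : ∀ a b, f a b = f b a) (a b : α) : f (a ⊓ b) (a ⊔ b) = f a b := by
  rcases le_total a b with h | h
  · rw [inf_eq_left.2 h, sup_eq_right.2 h]
  · rw [inf_eq_right.2 h, sup_eq_left.2 h, hf]

section Sym2

variable {α M : Type*} [Fintype α] [DecidableEq α]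

lemma card_filter_sym2Mk_eq (e : Sym2 α) :
    #{p : α × α | s(p.1, p.2) = e} = if e.IsDiag then 1 else 2 := by
  induction e using Sym2.ind with
  | _ a b =>
    have hfiber : ({p : α × α | s(p.1, p.2) = s(a, b)} : Finset _) = {(a, b), (b, a)} := by
      ext ⟨x, y⟩
      simp
    rw [hfiber]
    by_cases hab : a = b
    · simp [hab]
    · rw [if_neg (Sym2.mk_isDiag_iff.not.2 hab)]
      exact card_pair fun h => hab (Prod.ext_iff.1 h).1

lemma sum_sym2Mk [AddCommMonoid M] (F : Sym2 α → M) :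
    ∑ p : α × α, F s(p.1, p.2) = ∑ e : Sym2 α, (if e.IsDiag then 1 else 2) • F e := by
  simp_rw [← card_filter_sym2Mk_eq, ← sum_const, sum_fiberwise']

lemma prod_pow_count_diag [CommMonoid M] (E : Multiset (Sym2 α)) (f : Sym2 α → M) :
    ∏ v, f s(v, v) ^ E.count s(v, v) = (E.map fun e => if e.IsDiag then f e else 1).prod := by
  rw [prod_multiset_map_count]
  simp_rw [ite_pow, one_pow]
  rw [← prod_filter]
  refine (prod_map univ ⟨Sym2.diag, Sym2.diag_injective⟩ fun e => f e ^ E.count e).symm.trans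
    (prod_subset (fun e he => ?_) fun e _ he => ?_).symm
  · obtain ⟨he, hd⟩ := mem_filter.1 he
    exact mem_map.2 ⟨_, mem_univ _, Sym2.diag_diagElem hd⟩
  · obtain ⟨v, -, rfl⟩ := mem_map.1 ‹_›
    rw [Multiset.count_eq_zero.2 fun h => he (mem_filter.2 ⟨Multiset.mem_toFinset.2 h, rfl⟩),
      pow_zero]

lemma sum_sym2_nsmul_inf_sup [LinearOrder α] [AddCommMonoid M] {f : α → α → M}
    (hf : ∀ a b, f a b = f b a) :
    ∑ e : Sym2 α, (if e.IsDiag then 1 else 2) • f e.inf e.sup = ∑ a, ∑ b, f a b := by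
  rw [← sum_sym2Mk (fun e => f e.inf e.sup), ← Fintype.sum_prod_type']
  simp_rw [Sym2.inf_mk, Sym2.sup_mk, inf_sup_apply_of_symm hf]

end Sym2

lemma kappa_mul_factorial {n : ℕ} (E : Multiset (Sym2 (Fin n))) :
    (kappa E : ℝ) * (Multiset.card E).factorial =
      E.countPerms * (E.map fun e => if e.IsDiag then (2 : ℝ)⁻¹ else 1).prod := by
  rw [← prod_pow_count_diag E fun _ => (2 : ℝ)⁻¹, ← E.prod_factorial_count_mul_countPerms, kappa]
  push_cast
  rw [prod_inv_distrib (s := E.toFinset)]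
  simp_rw [inv_pow]
  have hfact : ∏ e ∈ E.toFinset, ((E.count e).factorial : ℝ) ≠ 0 := by positivity
  field_simp

lemma sum_kappa_mul_prod_pow {n : ℕ} (m : ℕ) (x : Sym2 (Fin n) → ℝ) :
    ∑ E : Sym (Sym2 (Fin n)) m, (kappa E.1 : ℝ) * ∏ e ∈ E.1.toFinset, x e ^ E.1.count e =
      (∑ e, (if e.IsDiag then (2 : ℝ)⁻¹ else 1) * x e) ^ m / m.factorial := by
  rw [sum_pow, sym_univ, sum_div]
  refine sum_congr rfl fun E _ => ?_
  have hκ := kappa_mul_factorial E.1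
  rw [E.2] at hκ
  rw [Multiset.prod_map_mul, ← prod_multiset_map_count, ← mul_assoc, ← hκ]
  field_simp

lemma sum_weight_one {q n : ℕ} {R : Matrix (Fin q) (Fin q) ℝ} (hR : R.IsSymm) (m : ℕ)
    (c : Fin n → Fin q) :
    ∑ E : Sym (Sym2 (Fin n)) m, weight R 1 E.1 c =
      (∑ i, ∑ j, (classSizes c i : ℝ) * R i j * classSizes c j) ^ m / (2 ^ m * m.factorial) := by
  have hloops : ∑ e : Sym2 (Fin n), (if e.IsDiag then (2 : ℝ)⁻¹ else 1) * R (c e.inf) (c e.sup) =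
      2⁻¹ * ∑ u, ∑ v, R (c u) (c v) := by
    rw [← sum_sym2_nsmul_inf_sup fun u v => hR.apply (c v) (c u), mul_sum]
    refine sum_congr rfl fun e _ => ?_
    split_ifs
    · rw [one_smul]
    · rw [two_smul]
      ring
  have hquad : ∑ u, ∑ v, R (c u) (c v) =
      ∑ i, ∑ j, (classSizes c i : ℝ) * R i j * classSizes c j :=
    sum_sum_comp_eq_sum_sum_classSizes c R
  simp_rw [weight, one_pow, mul_one]
  rw [sum_kappa_mul_prod_pow, hloops, hquad, mul_pow, inv_pow, inv_mul_eq_div, div_div]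

theorem g_sigma_one_eq_general (q : ℕ) (R : Matrix (Fin q) (Fin q) ℝ)
    (hsymm : R.IsSymm) (n m : ℕ) :
    g R 1 n m =
      1 / (2 ^ m * (m.factorial : ℝ)) *
        ∑ v ∈ Finset.Nat.antidiagonalTuple q n,
          ((n.factorial : ℝ) / ∏ i, ((v i).factorial : ℝ)) *
            (∑ i, ∑ j, (v i : ℝ) * R i j * (v j)) ^ m := by
  set Q : (Fin q → ℕ) → ℝ := fun v => ∑ i, ∑ j, (v i : ℝ) * R i j * v j
  calc g R 1 n m = ∑ c : Fin n → Fin q, Q (classSizes c) ^ m / (2 ^ m * m.factorial) := by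
        rw [g, sum_comm]
        exact sum_congr rfl fun c _ => sum_weight_one hsymm m c
    _ = ∑ v ∈ piAntidiag univ n, Nat.multinomial univ v • (Q v ^ m / (2 ^ m * m.factorial)) := by
        rw [sum_comp_classSizes fun v => Q v ^ m / (2 ^ m * m.factorial), Fintype.card_fin]
    _ = _ := by
        rw [piAntidiag_univ_fin_eq_antidiagonalTuple, mul_sum]
        refine sum_congr rfl fun v hv => ?_
        rw [nsmul_eq_mul, Nat.cast_multinomial, Nat.mem_antidiagonalTuple.1 hv]
        ring

/-- direct expression for `g_{R,1}(n, m)` as a sum over the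
possible color-class sizes. -/
theorem g_sigma_one_eq (q : ℕ) (R : Matrix (Fin q) (Fin q) ℝ)
    (hsymm : R.IsSymm) (hpos : ∀ i j, 0 ≤ R i j) (n m : ℕ) :
    g R 1 n m =
      1 / (2 ^ m * (m.factorial : ℝ)) *
        ∑ v ∈ Finset.Nat.antidiagonalTuple q n,
          ((n.factorial : ℝ) / ∏ i, ((v i).factorial : ℝ)) *
            (∑ i, ∑ j, (v i : ℝ) * R i j * (v j)) ^ m :=
  g_sigma_one_eq_general q R hsymm n m

end

end Inhomog
end
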